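/- With the notation of the previous statement: if a monomial x_{1,ℓ_1}⋯x_{n,ℓ_n} satisfies r+1 − Σ_{i∈I}(r+1−d_i−ℓ_i) > d_I for every I ⊆ [n], then there exists (m_1,...,m_n) ∈ M(p) with ℓ_i > r−d_i−m_i for all i, and consequently the monomial is not in I_o = ∩_{m∈M(p)} P_m. -/

import Mathlib

open Module MvPolynomial

/-- The coordinate-subspace prime `P_m` associated to an integer vector `m`: it is generated by
the variables `x_{i,j}` with `1 ≤ j ≤ r - dᵢ - mᵢ` (here `j : Fin (r+1-dᵢ)` encodes the
variable `x_{i,j+1}`). -/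
noncomputable def primeP {K V : Type*} [Field K] [AddCommGroup V] [Module K V]
    [FiniteDimensional K V] (k : Type*) [Field k] (r n : ℕ) (Vs : Fin n → Submodule K V)
    (m : Fin n → ℕ) :
    Ideal (MvPolynomial ((i : Fin n) × Fin (r + 1 - finrank K ↥(Vs i))) k) :=
  Ideal.span { q | ∃ (i : Fin n) (j : Fin (r + 1 - finrank K ↥(Vs i))),
    (j : ℕ) + 1 ≤ r - finrank K ↥(Vs i) - m i ∧ q = X ⟨i, j⟩ }

/-- The set `M(h)` of constraint vectors of sum `h`. -/
def Mset {K V : Type*} [Field K] [AddCommGroup V] [Module K V] [FiniteDimensional K V]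
    (r n : ℕ) (Vs : Fin n → Submodule K V) (h : ℕ) : Set (Fin n → ℕ) :=
  { m | ∑ i, m i = h ∧ ∀ I : Finset (Fin n), I.Nonempty →
      ∑ i ∈ I, m i + finrank K ↥(⨅ i ∈ I, Vs i) < r + 1 }

/-- The numeric value `ℓᵢ ∈ {0,…,r+1-dᵢ}` of a choice `ℓ i : Option (Fin (r+1-dᵢ))`
(`none` means `ℓᵢ = 0`, `some j` means `ℓᵢ = j+1`). -/
def lval {K V : Type*} [Field K] [AddCommGroup V] [Module K V] [FiniteDimensional K V]
    {r n : ℕ} {Vs : Fin n → Submodule K V}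
    (ℓ : (i : Fin n) → Option (Fin (r + 1 - finrank K ↥(Vs i)))) (i : Fin n) : ℕ :=
  (ℓ i).elim 0 (fun j => (j : ℕ) + 1)

/-!
Write `d I = dim ⋂_{i ∈ I} Vᵢ`. The vector `m₀ᵢ = r + 1 - dᵢ - ℓᵢ` satisfies the defining
inequalities of `M(h)`, and the claim is that it can be raised coordinatewise into `M(p)`.
Since `d` is supermodular on intersecting pairs, the union of two intersecting tight sets is
tight. So if no coordinate of a feasible `m` can be raised, the maximal tight sets partition
`[n]`, and summing over that partition bounds the total of every feasible vector by `∑ m`,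
whence `∑ m = p`. Finally, the monomial misses `P_m` because it does not vanish at the point that
is `0` on the generators of `P_m` and `1` elsewhere.
-/

section Feasible

variable {ι : Type*}

def IsFeasible (d : Finset ι → ℕ) (r : ℕ) (m : ι → ℕ) : Prop :=
  ∀ I : Finset ι, I.Nonempty → ∑ i ∈ I, m i + d I ≤ r

def IsTight (d : Finset ι → ℕ) (r : ℕ) (m : ι → ℕ) (I : Finset ι) : Prop :=
  ∑ i ∈ I, m i + d I = r

variable [DecidableEq ι]

def IsIntersectingSupermodular (d : Finset ι → ℕ) : Prop :=
  ∀ I J : Finset ι, (I ∩ J).Nonempty → d I + d J ≤ d (I ∪ J) + d (I ∩ J)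

variable {d : Finset ι → ℕ} {r : ℕ} {m m' : ι → ℕ}

theorem IsFeasible.isTight_union (hd : IsIntersectingSupermodular d) (hm : IsFeasible d r m)
    {I J : Finset ι} (hIJ : (I ∩ J).Nonempty) (hI : IsTight d r m I) (hJ : IsTight d r m J) :
    IsTight d r m (I ∪ J) := by
  have hunion := hm (I ∪ J) (hIJ.mono Finset.inter_subset_union)
  have hinter := hm (I ∩ J) hIJ
  have hsum := Finset.sum_union_inter (s₁ := I) (s₂ := J) (f := m)
  have := hd I J hIJ
  unfold IsTight at *
  omega

theorem IsFeasible.exists_isTight_maximal [Fintype ι] (hd : IsIntersectingSupermodular d)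
    (hm : IsFeasible d r m) {i : ι} (hi : ∃ I, i ∈ I ∧ IsTight d r m I) :
    ∃ T, i ∈ T ∧ IsTight d r m T ∧ ∀ I, i ∈ I → IsTight d r m I → I ⊆ T := by
  classical
  set S := Finset.univ.filter fun I => i ∈ I ∧ IsTight d r m I
  obtain ⟨T, hTS, hTmax⟩ :=
    S.exists_max_image Finset.card (by simpa [S, Finset.Nonempty] using hi)
  obtain ⟨hiT, hT⟩ := (Finset.mem_filter.1 hTS).2
  refine ⟨T, hiT, hT, fun I hiI hI => ?_⟩
  have hTI : T ∪ I ∈ S := Finset.mem_filter.2 ⟨Finset.mem_univ _, Finset.mem_union_left _ hiT,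
    hm.isTight_union hd ⟨i, Finset.mem_inter.2 ⟨hiT, hiI⟩⟩ hT hI⟩
  rw [Finset.eq_of_subset_of_card_le Finset.subset_union_left (hTmax _ hTI)]
  exact Finset.subset_union_right

/-- The maximal tight sets of `m` partition `ι`, and on each block `T` every feasible `m'` has
total at most `r - d T`, which is the total of `m` on `T`. -/
theorem IsFeasible.sum_le_of_forall_isTight [Fintype ι] (hd : IsIntersectingSupermodular d)
    (hm : IsFeasible d r m) (hm' : IsFeasible d r m')
    (htight : ∀ i, ∃ I, i ∈ I ∧ IsTight d r m I) :
    ∑ i, m' i ≤ ∑ i, m i := by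
  choose T hiT hT hTmax using fun i => hm.exists_isTight_maximal hd (htight i)
  have hTeq : ∀ i j, j ∈ T i → T j = T i := fun i j hj =>
    have hji : T i ⊆ T j := hTmax j (T i) hj (hT i)
    (hTmax i (T j) (hji (hiT i)) (hT j)).antisymm hji
  have hfiber : ∀ a, Finset.univ.filter (fun i => T i = T a) = T a := fun a => by
    ext j
    simp only [Finset.mem_filter, Finset.mem_univ, true_and]
    exact ⟨fun h => h ▸ hiT j, hTeq a j⟩
  have hmaps : ∀ i ∈ Finset.univ, T i ∈ Finset.univ.image T := fun i _ =>
    Finset.mem_image_of_mem T (Finset.mem_univ i)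
  calc ∑ i, m' i = ∑ A ∈ Finset.univ.image T, ∑ i with T i = A, m' i :=
        (Finset.sum_fiberwise_of_maps_to hmaps m').symm
    _ ≤ ∑ A ∈ Finset.univ.image T, ∑ i with T i = A, m i := by
        refine Finset.sum_le_sum fun A hA => ?_
        obtain ⟨a, -, rfl⟩ := Finset.mem_image.1 hA
        have hle := hm' (T a) ⟨a, hiT a⟩
        have heq : IsTight d r m (T a) := hT a
        rw [hfiber a]
        unfold IsTight at heq
        omega
    _ = ∑ i, m i := Finset.sum_fiberwise_of_maps_to hmaps m

theorem IsFeasible.exists_isTight_of_not_isFeasible_add_single (hm : IsFeasible d r m) {i : ι}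
    (h : ¬ IsFeasible d r (m + Pi.single i 1)) : ∃ I, i ∈ I ∧ IsTight d r m I := by
  simp only [IsFeasible, not_forall, not_le] at h
  obtain ⟨I, hI, hlt⟩ := h
  have hle := hm I hI
  simp only [Pi.add_apply, Finset.sum_add_distrib, Finset.sum_pi_single'] at hlt
  split_ifs at hlt with hiI
  · exact ⟨I, hiI, by unfold IsTight; omega⟩
  · omega

theorem IsFeasible.exists_isFeasible_add_single [Fintype ι] (hd : IsIntersectingSupermodular d)
    (hm : IsFeasible d r m) (hm' : IsFeasible d r m') (hlt : ∑ i, m i < ∑ i, m' i) :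
    ∃ i, IsFeasible d r (m + Pi.single i 1) := by
  by_contra! h
  have := hm.sum_le_of_forall_isTight hd hm' fun i =>
    hm.exists_isTight_of_not_isFeasible_add_single (h i)
  omega

/-- The augmentation property of polymatroids. -/
theorem IsFeasible.exists_le_sum_eq [Fintype ι] (hd : IsIntersectingSupermodular d)
    (hm : IsFeasible d r m) (hm' : IsFeasible d r m') (hle : ∑ i, m i ≤ ∑ i, m' i) :
    ∃ m'', m ≤ m'' ∧ IsFeasible d r m'' ∧ ∑ i, m'' i = ∑ i, m' i := by
  induction hk : ∑ i, m' i - ∑ i, m i generalizing m with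
  | zero => exact ⟨m, le_rfl, hm, by omega⟩
  | succ k ih =>
    obtain ⟨i, hi⟩ := hm.exists_isFeasible_add_single hd hm' (by omega)
    have hsum : ∑ j, (m + Pi.single i 1 : ι → ℕ) j = ∑ j, m j + 1 := by
      simp [Finset.sum_add_distrib]
    obtain ⟨m'', hle'', hm'', hsum''⟩ := ih hi (by omega) (by omega)
    exact ⟨m'', le_self_add.trans hle'', hm'', hsum''⟩

end Feasible

section Subspaces

variable {K V ι : Type*} [Field K] [AddCommGroup V] [Module K V] [FiniteDimensional K V]
  [DecidableEq ι]

theorem Submodule.finrank_biInf_add_finrank_biInf_le (Vs : ι → Submodule K V) (I J : Finset ι) :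
    finrank K ↥(⨅ i ∈ I, Vs i) + finrank K ↥(⨅ i ∈ J, Vs i) ≤
      finrank K ↥(⨅ i ∈ I ∪ J, Vs i) + finrank K ↥(⨅ i ∈ I ∩ J, Vs i) := by
  have hsup : (⨅ i ∈ I, Vs i) ⊔ (⨅ i ∈ J, Vs i) ≤ ⨅ i ∈ I ∩ J, Vs i :=
    le_iInf₂ fun i hi => sup_le (iInf₂_le i (Finset.mem_inter.1 hi).1)
      (iInf₂_le i (Finset.mem_inter.1 hi).2)
  have := Submodule.finrank_mono hsup
  rw [Finset.iInf_union, ← Submodule.finrank_sup_add_finrank_inf_eq]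
  omega

theorem isIntersectingSupermodular_finrank_biInf [Fintype ι] (Vs : ι → Submodule K V) :
    IsIntersectingSupermodular fun I => finrank K ↥(⨅ i ∈ I, Vs i) :=
  fun I J _ => Submodule.finrank_biInf_add_finrank_biInf_le Vs I J

end Subspaces

section Monomial

variable {K V : Type*} [Field K] [AddCommGroup V] [Module K V] [FiniteDimensional K V]
  {r n : ℕ} {Vs : Fin n → Submodule K V}

theorem mem_Mset_iff {h : ℕ} {m : Fin n → ℕ} :
    m ∈ Mset (K := K) r n Vs h ↔
      ∑ i, m i = h ∧ IsFeasible (fun I => finrank K ↥(⨅ i ∈ I, Vs i)) r m := by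
  simp only [Mset, IsFeasible, Set.mem_ofPred_eq, Nat.lt_add_one_iff]

theorem prod_X_notMem_primeP (k : Type*) [Field k] {m : Fin n → ℕ}
    {ℓ : (i : Fin n) → Option (Fin (r + 1 - finrank K ↥(Vs i)))}
    (hℓ : ∀ i, r - finrank K ↥(Vs i) - m i < lval (K := K) ℓ i) :
    (∏ i : Fin n, (ℓ i).elim 1 (fun j => (X ⟨i, j⟩ :
        MvPolynomial ((i' : Fin n) × Fin (r + 1 - finrank K ↥(Vs i'))) k)))
      ∉ primeP (K := K) k r n Vs m := by
  let x : ((i : Fin n) × Fin (r + 1 - finrank K ↥(Vs i))) → k := fun s =>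
    if (s.2 : ℕ) + 1 ≤ r - finrank K ↥(Vs s.1) - m s.1 then 0 else 1
  have hker : primeP (K := K) k r n Vs m ≤ RingHom.ker (eval x) :=
    Ideal.span_le.2 <| by
      rintro _ ⟨i, j, hj, rfl⟩
      rw [SetLike.mem_coe, RingHom.mem_ker, eval_X]
      exact if_pos hj
  have heval : eval x (∏ i : Fin n, (ℓ i).elim 1 (fun j => (X ⟨i, j⟩ :
      MvPolynomial ((i' : Fin n) × Fin (r + 1 - finrank K ↥(Vs i'))) k))) = 1 := by
    rw [map_prod]
    refine Finset.prod_eq_one fun i _ => ?_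
    have hi := hℓ i
    cases hℓi : ℓ i with
    | none => simp
    | some j =>
      simp only [lval, hℓi, Option.elim] at hi
      simp only [Option.elim, eval_X, x]
      rw [if_neg (by omega)]
  intro hmem
  have hzero := RingHom.mem_ker.1 (hker hmem)
  rw [heval] at hzero
  exact one_ne_zero hzero

end Monomial

theorem monomial_not_mem_Io_general
    {K V : Type*} [Field K] [AddCommGroup V] [Module K V] [FiniteDimensional K V]
    (k : Type*) [Field k] (r n : ℕ)
    (Vs : Fin n → Submodule K V) (p : ℕ)
    (hpne : (Mset (K := K) r n Vs p).Nonempty)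
    (hpmax : ∀ h : ℕ, (Mset (K := K) r n Vs h).Nonempty → h ≤ p)
    (ℓ : (i : Fin n) → Option (Fin (r + 1 - finrank K ↥(Vs i))))
    (hl : ∀ I : Finset (Fin n), I.Nonempty →
      finrank K ↥(⨅ i ∈ I, Vs i) +
        ∑ i ∈ I, (r + 1 - finrank K ↥(Vs i) - lval (K := K) ℓ i) < r + 1) :
    ∃ m ∈ Mset (K := K) r n Vs p,
      (∀ i : Fin n, r - finrank K ↥(Vs i) - m i < lval (K := K) ℓ i) ∧
      (∏ i : Fin n, (ℓ i).elim 1 (fun j => (X ⟨i, j⟩ :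
          MvPolynomial ((i' : Fin n) × Fin (r + 1 - finrank K ↥(Vs i'))) k)))
        ∉ ⨅ m' ∈ Mset (K := K) r n Vs p, primeP (K := K) k r n Vs m' := by
  have hm₀ : IsFeasible (fun I => finrank K ↥(⨅ i ∈ I, Vs i)) r
      fun i => r + 1 - finrank K ↥(Vs i) - lval (K := K) ℓ i := fun I hI => by
    have := hl I hI
    dsimp only
    omega
  obtain ⟨m', hm'M⟩ := hpne
  obtain ⟨hm'sum, hm'⟩ := mem_Mset_iff.1 hm'M
  have hle : ∑ i, (r + 1 - finrank K ↥(Vs i) - lval (K := K) ℓ i) ≤ ∑ i, m' i :=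
    hm'sum ▸ hpmax _ ⟨_, mem_Mset_iff.2 ⟨rfl, hm₀⟩⟩
  obtain ⟨m, hm₀m, hm, hmsum⟩ :=
    hm₀.exists_le_sum_eq (isIntersectingSupermodular_finrank_biInf Vs) hm' hle
  have hmM : m ∈ Mset (K := K) r n Vs p := mem_Mset_iff.2 ⟨hmsum.trans hm'sum, hm⟩
  have hlt : ∀ i, r - finrank K ↥(Vs i) - m i < lval (K := K) ℓ i := fun i => by
    have hsingle := hl {i} (Finset.singleton_nonempty i)
    rw [Finset.iInf_singleton, Finset.sum_singleton] at hsingle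
    have : r + 1 - finrank K ↥(Vs i) - lval (K := K) ℓ i ≤ m i := hm₀m i
    omega
  exact ⟨m, hmM, hlt, fun hIo => prod_X_notMem_primeP k hlt
    (iInf₂_le (f := fun m' _ => primeP (K := K) k r n Vs m') m hmM hIo)⟩

/-- Lemma `whyout`: if a square-free monomial `x_{1,ℓ₁} ⋯ x_{n,ℓ_n}` satisfies
`r+1 - ∑_{i∈I} (r+1-dᵢ-ℓᵢ) > d_I` for every nonempty `I ⊆ [n]`, then there is `m ∈ M(p)` with
`ℓᵢ > r-dᵢ-mᵢ` for all `i`, and consequently the monomial does not lie in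
`I_o = ⋂_{m ∈ M(p)} P_m`. -/
theorem monomial_not_mem_Io
    {K V : Type*} [Field K] [AddCommGroup V] [Module K V] [FiniteDimensional K V]
    (k : Type*) [Field k] (r n : ℕ) (hV : finrank K V = r + 1)
    (Vs : Fin n → Submodule K V) (hbot : (⨅ i, Vs i) = ⊥) (p : ℕ)
    (hpne : (Mset (K := K) r n Vs p).Nonempty)
    (hpmax : ∀ h : ℕ, (Mset (K := K) r n Vs h).Nonempty → h ≤ p)
    (ℓ : (i : Fin n) → Option (Fin (r + 1 - finrank K ↥(Vs i))))
    (hl : ∀ I : Finset (Fin n), I.Nonempty →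
      finrank K ↥(⨅ i ∈ I, Vs i) +
        ∑ i ∈ I, (r + 1 - finrank K ↥(Vs i) - lval (K := K) ℓ i) < r + 1) :
    ∃ m ∈ Mset (K := K) r n Vs p,
      (∀ i : Fin n, r - finrank K ↥(Vs i) - m i < lval (K := K) ℓ i) ∧
      (∏ i : Fin n, (ℓ i).elim 1 (fun j => (X ⟨i, j⟩ :
          MvPolynomial ((i' : Fin n) × Fin (r + 1 - finrank K ↥(Vs i'))) k)))
        ∉ ⨅ m' ∈ Mset (K := K) r n Vs p, primeP (K := K) k r n Vs m' :=
  monomial_not_mem_Io_general k r n Vs p hpne hpmax ℓ hl
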